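/- arXiv:0710.0442 — 2 statements merged into one kernel-verified Lean document; each statement's English description precedes it below -/
import Mathlib

section
/- Let I = {1,…,κ} with κ ≥ 2, and for each i ∈ I let A_i = [[u_i, v_i],[w_i, z_i]] ∈ ℝ^{2×2} with u_i, v_i, w_i, z_i > 0, A_i invertible and ‖A_i‖ ≤ ᾱ < 1. Suppose the closed intervals [min(w_i/u_i, z_i/v_i), max(w_i/u_i, z_i/v_i)] are pairwise disjoint for i ∈ I. Then, with θ = (1/√2)·(1,1), there exists 0 < β < π/2 such that for all i ∈ I: A_i(cl X(θ,β)) ⊂ X(θ,β) and A_iᵀ(cl X(θ,β)) ⊂ X(θ,β), and A_i(cl X(θ,β)) ∩ A_j(cl X(θ,β)) = {0} whenever i ≠ j. -/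
open Set Matrix Real

noncomputable section

abbrev E2 := EuclideanSpace ℝ (Fin 2)

/-- the cone X(θ,β) -/
def cone (θ : E2) (β : ℝ) : Set E2 :=
  {x | x ≠ 0 ∧ Real.cos (β / 2) * ‖x‖ < |(inner ℝ θ x : ℝ)|}

/-- the unit vector `(1/√2)·(1,1)` -/
noncomputable def theta : E2 :=
  (Real.sqrt 2)⁻¹ • (EuclideanSpace.single 0 1 + EuclideanSpace.single 1 1)

noncomputable def mLin (A : Matrix (Fin 2) (Fin 2) ℝ) : E2 →L[ℝ] E2 :=
  LinearMap.toContinuousLinearMap (Matrix.toEuclideanLin A)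

/-- largest singular value = operator norm -/
noncomputable def a1 (A : Matrix (Fin 2) (Fin 2) ℝ) : ℝ := ‖mLin A‖

/-!
In coordinates, `x ∈ X(θ, β)` iff `x ≠ 0` and `cos β · (x₀² + x₁²) < 2 x₀ x₁`, i.e. (for
`cos β ≥ 0`) `x` has a slope `t = x₁ / x₀` with `cos β · (1 + t²) < 2t`. The closure of the cone
lies in the double quadrant `x₀ x₁ ≥ 0`, and a matrix `[[u, v], [w, z]]` with positive entries
sends a nonzero vector of that quadrant to one whose slope is a mediant of `w / u` and `z / v`,
hence lies in the slope interval `[min, max]` of these ratios. Every slope interval is a compact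
subset of `(0, ∞)`, so all of them (and those of the transposes) satisfy the cone inequality once
`cos β > 0` is small enough; disjointness of the slope intervals separates the images.
-/

open Filter Topology
open scoped InnerProductSpace

lemma toEuclideanLin_fin_two_apply (A : Matrix (Fin 2) (Fin 2) ℝ) (x : E2) (k : Fin 2) :
    toEuclideanLin A x k = A k 0 * x 0 + A k 1 * x 1 := by
  fin_cases k <;> simp [toLpLin_apply]

lemma EuclideanSpace.norm_sq_fin_two (x : E2) : ‖x‖ ^ 2 = x 0 ^ 2 + x 1 ^ 2 := by
  simp [EuclideanSpace.norm_sq_eq, Fin.sum_univ_two]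

lemma EuclideanSpace.eq_zero_of_fin_two {x : E2} (h0 : x 0 = 0) (h1 : x 1 = 0) : x = 0 := by
  ext k; fin_cases k <;> simpa

lemma theta_apply (k : Fin 2) : theta k = (√2)⁻¹ := by
  fin_cases k <;> simp [theta]

lemma inner_theta (x : E2) : ⟪theta, x⟫_ℝ = (√2)⁻¹ * (x 0 + x 1) := by
  simp [EuclideanSpace.inner_eq_star_dotProduct, dotProduct, Fin.sum_univ_two, theta_apply]
  ring

lemma cos_half_mul_norm_sq_sub_inner_theta_sq (β : ℝ) (x : E2) :
    (cos (β / 2) * ‖x‖) ^ 2 - ⟪theta, x⟫_ℝ ^ 2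
      = (cos β * (x 0 ^ 2 + x 1 ^ 2) - 2 * (x 0 * x 1)) / 2 := by
  rw [mul_pow, EuclideanSpace.norm_sq_fin_two, inner_theta, mul_pow, inv_pow,
    sq_sqrt zero_le_two, cos_sq, mul_div_cancel₀ β two_ne_zero]
  ring

section Cone

variable {β : ℝ}

lemma mem_cone_theta_iff (hβ : 0 ≤ cos (β / 2)) (x : E2) :
    x ∈ cone theta β ↔ x ≠ 0 ∧ cos β * (x 0 ^ 2 + x 1 ^ 2) < 2 * (x 0 * x 1) := by
  have key := cos_half_mul_norm_sq_sub_inner_theta_sq β x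
  rw [cone, mem_ofPred_eq, ← pow_lt_pow_iff_left₀ (by positivity) (abs_nonneg _) two_ne_zero,
    sq_abs]
  constructor <;> rintro ⟨hx, h⟩ <;> exact ⟨hx, by linarith⟩

lemma closure_cone_theta_subset (hβ : 0 ≤ cos (β / 2)) :
    closure (cone theta β) ⊆ {x | cos β * (x 0 ^ 2 + x 1 ^ 2) ≤ 2 * (x 0 * x 1)} := by
  refine closure_minimal (fun x hx => ((mem_cone_theta_iff hβ x).1 hx).2.le) ?_
  exact isClosed_le (by fun_prop) (by fun_prop)

lemma smul_mem_cone {θ x : E2} {t : ℝ} (ht : 0 < t) (hx : x ∈ cone θ β) : t • x ∈ cone θ β := by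
  refine ⟨smul_ne_zero ht.ne' hx.1, ?_⟩
  rw [norm_smul, inner_smul_right, abs_mul, Real.norm_of_nonneg ht.le, abs_of_pos ht,
    mul_left_comm]
  exact mul_lt_mul_of_pos_left hx.2 ht

lemma zero_mem_closure_cone {θ x : E2} (hx : x ∈ cone θ β) : (0 : E2) ∈ closure (cone θ β) := by
  have h : Tendsto (fun t : ℝ => t • x) (𝓝[>] 0) (𝓝 0) := by
    have hc : Continuous fun t : ℝ => t • x := continuous_id.smul continuous_const
    exact (hc.tendsto' 0 0 (zero_smul ℝ x)).mono_left nhdsWithin_le_nhds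
  exact mem_closure_of_tendsto h (eventually_nhdsWithin_of_forall fun t ht => smul_mem_cone ht hx)

lemma theta_mem_cone_theta (hβ : 0 ≤ cos (β / 2)) (hβ' : cos β < 1) : theta ∈ cone theta β := by
  rw [mem_cone_theta_iff hβ, theta_apply, theta_apply]
  refine ⟨fun h => by simpa [theta_apply] using congrArg (· 0) h, ?_⟩
  have : 0 < (√2)⁻¹ ^ 2 := by positivity
  nlinarith


lemma mul_nonneg_of_mem_closure_cone_theta (hβ : 0 ≤ cos (β / 2)) (hβ' : 0 ≤ cos β)
    {x : E2} (hx : x ∈ closure (cone theta β)) : 0 ≤ x 0 * x 1 := by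
  have h := closure_cone_theta_subset hβ hx
  have : 0 ≤ cos β * (x 0 ^ 2 + x 1 ^ 2) := by positivity
  linarith [h.out]

end Cone

lemma mul_add_mul_div_add_mem_Icc {m n a b : ℝ} (ha : 0 ≤ a) (hb : 0 ≤ b) (hab : 0 < a + b) :
    (m * a + n * b) / (a + b) ∈ Icc (min m n) (max m n) := by
  rw [mem_Icc, le_div_iff₀ hab, div_le_iff₀ hab]
  constructor
  · nlinarith [min_le_left m n, min_le_right m n]
  · nlinarith [le_max_left m n, le_max_right m n]

lemma eventually_forall_Icc_mul_one_add_sq_lt {r : ℝ} (hr : 0 < r) (R : ℝ) :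
    ∀ᶠ c in 𝓝 0, ∀ t ∈ Icc r R, c * (1 + t ^ 2) < 2 * t := by
  have hc : Tendsto (fun c : ℝ => c * (1 + R ^ 2)) (𝓝 0) (𝓝 0) :=
    (continuous_mul_const _).tendsto' 0 0 (zero_mul _)
  filter_upwards [hc.eventually (gt_mem_nhds (by linarith : (0 : ℝ) < 2 * r))]
    with c hcR t ⟨hrt, htR⟩
  rcases le_total c 0 with hc0 | hc0
  · nlinarith [sq_nonneg t]
  · nlinarith [mul_le_mul_of_nonneg_left (pow_le_pow_left₀ (hr.le.trans hrt) htR 2) hc0]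

def slopeInterval (A : Matrix (Fin 2) (Fin 2) ℝ) : Set ℝ :=
  Icc (min (A 1 0 / A 0 0) (A 1 1 / A 0 1)) (max (A 1 0 / A 0 0) (A 1 1 / A 0 1))

section PositiveMatrix

variable {A : Matrix (Fin 2) (Fin 2) ℝ} (hA : ∀ k l, 0 < A k l)
include hA

lemma eventually_forall_slopeInterval_mul_one_add_sq_lt :
    ∀ᶠ c in 𝓝 0, ∀ t ∈ slopeInterval A, c * (1 + t ^ 2) < 2 * t :=
  eventually_forall_Icc_mul_one_add_sq_lt
    (lt_min (div_pos (hA 1 0) (hA 0 0)) (div_pos (hA 1 1) (hA 0 1))) _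

lemma slope_mem_slopeInterval_of_nonneg {x : E2} (h0 : 0 ≤ x 0) (h1 : 0 ≤ x 1) (hx : x ≠ 0) :
    0 < toEuclideanLin A x 0 ∧ toEuclideanLin A x 1 / toEuclideanLin A x 0 ∈ slopeInterval A := by
  have hpos : 0 < A 0 0 * x 0 + A 0 1 * x 1 := by
    by_contra! h
    exact hx (EuclideanSpace.eq_zero_of_fin_two (by nlinarith [hA 0 0, hA 0 1])
      (by nlinarith [hA 0 0, hA 0 1]))
  have hmediant : A 1 0 * x 0 + A 1 1 * x 1
      = A 1 0 / A 0 0 * (A 0 0 * x 0) + A 1 1 / A 0 1 * (A 0 1 * x 1) := by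
    field_simp [(hA 0 0).ne', (hA 0 1).ne']
  simp only [toEuclideanLin_fin_two_apply]
  refine ⟨hpos, ?_⟩
  rw [hmediant]
  exact mul_add_mul_div_add_mem_Icc (mul_nonneg (hA 0 0).le h0) (mul_nonneg (hA 0 1).le h1) hpos

lemma exists_slope_mem_slopeInterval {x : E2} (hx : x ≠ 0) (hx' : 0 ≤ x 0 * x 1) :
    ∃ t ∈ slopeInterval A,
      toEuclideanLin A x 0 ≠ 0 ∧ toEuclideanLin A x 1 = t * toEuclideanLin A x 0 := by
  rcases mul_nonneg_iff.1 hx' with ⟨h0, h1⟩ | ⟨h0, h1⟩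
  · obtain ⟨hpos, hS⟩ := slope_mem_slopeInterval_of_nonneg hA h0 h1 hx
    exact ⟨_, hS, hpos.ne', (div_mul_cancel₀ _ hpos.ne').symm⟩
  · obtain ⟨hpos, hS⟩ := slope_mem_slopeInterval_of_nonneg hA (x := -x)
      (by simpa using h0) (by simpa using h1) (neg_ne_zero.2 hx)
    simp only [map_neg, PiLp.neg_apply, neg_div_neg_eq] at hpos hS
    exact ⟨_, hS, (neg_pos.1 hpos).ne, (div_mul_cancel₀ _ (neg_pos.1 hpos).ne).symm⟩

variable {β : ℝ} (hβ : 0 ≤ cos (β / 2)) (hβ' : 0 ≤ cos β)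
include hβ hβ'

lemma toEuclideanLin_mem_cone_theta (hS : ∀ t ∈ slopeInterval A, cos β * (1 + t ^ 2) < 2 * t)
    {x : E2} (hx : x ∈ closure (cone theta β)) (hx0 : x ≠ 0) :
    toEuclideanLin A x ∈ cone theta β := by
  obtain ⟨t, ht, hy0, hy1⟩ := exists_slope_mem_slopeInterval hA hx0
    (mul_nonneg_of_mem_closure_cone_theta hβ hβ' hx)
  set y := toEuclideanLin A x
  refine (mem_cone_theta_iff hβ y).2 ⟨fun h => hy0 (by simp [h]), ?_⟩
  calc cos β * (y 0 ^ 2 + y 1 ^ 2) = y 0 ^ 2 * (cos β * (1 + t ^ 2)) := by rw [hy1]; ring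
    _ < y 0 ^ 2 * (2 * t) := mul_lt_mul_of_pos_left (hS t ht) (by positivity)
    _ = 2 * (y 0 * y 1) := by rw [hy1]; ring

lemma image_inter_image_closure_cone_theta_subset {B : Matrix (Fin 2) (Fin 2) ℝ}
    (hB : ∀ k l, 0 < B k l) (hAB : Disjoint (slopeInterval A) (slopeInterval B)) :
    toEuclideanLin A '' closure (cone theta β) ∩ toEuclideanLin B '' closure (cone theta β)
      ⊆ {0} := by
  rintro y ⟨⟨x, hx, rfl⟩, ⟨x', hx', hxx'⟩⟩
  by_contra hy
  have hx0 : x ≠ 0 := by rintro rfl; exact hy (map_zero _)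
  have hx0' : x' ≠ 0 := by rintro rfl; exact hy (by rw [← hxx', map_zero]; rfl)
  obtain ⟨t, ht, hy0, hy1⟩ := exists_slope_mem_slopeInterval hA hx0
    (mul_nonneg_of_mem_closure_cone_theta hβ hβ' hx)
  obtain ⟨s, hs, -, hy1'⟩ := exists_slope_mem_slopeInterval hB hx0'
    (mul_nonneg_of_mem_closure_cone_theta hβ hβ' hx')
  rw [hxx', hy1] at hy1'
  exact hAB.ne_of_mem ht hs (mul_right_cancel₀ hy0 hy1')

end PositiveMatrix

theorem slope_condition_implies_kakeya_cones_general (κ : ℕ)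
    (A : Fin κ → Matrix (Fin 2) (Fin 2) ℝ) (u v w z : Fin κ → ℝ)
    (hu : ∀ i, 0 < u i) (hv : ∀ i, 0 < v i) (hw : ∀ i, 0 < w i) (hz : ∀ i, 0 < z i)
    (hA : ∀ i, A i = !![u i, v i; w i, z i])
    (hdisj : ∀ i j, i ≠ j →
      Set.Icc (min (w i / u i) (z i / v i)) (max (w i / u i) (z i / v i)) ∩
      Set.Icc (min (w j / u j) (z j / v j)) (max (w j / u j) (z j / v j)) = ∅) :
    ∃ β : ℝ, 0 < β ∧ β < π / 2 ∧
      (∀ i, ∀ x ∈ closure (cone theta β), x ≠ 0 →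
        Matrix.toEuclideanLin (A i) x ∈ cone theta β) ∧
      (∀ i, ∀ x ∈ closure (cone theta β), x ≠ 0 →
        Matrix.toEuclideanLin (A i)ᵀ x ∈ cone theta β) ∧
      (∀ i j, i ≠ j →
        (Matrix.toEuclideanLin (A i) '' closure (cone theta β)) ∩
          (Matrix.toEuclideanLin (A j) '' closure (cone theta β)) = {0}) := by
  have hpos : ∀ i k l, 0 < A i k l := by
    intro i k l
    rw [hA i]
    fin_cases k <;> fin_cases l <;> simp [hu, hv, hw, hz]
  have hsep : ∀ i j, i ≠ j → Disjoint (slopeInterval (A i)) (slopeInterval (A j)) := by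
    intro i j hij
    simpa [slopeInterval, hA, Set.disjoint_iff_inter_eq_empty] using hdisj i j hij
  have hev : ∀ᶠ c in 𝓝[>] (0 : ℝ), c < 1 ∧ ∀ i,
      (∀ t ∈ slopeInterval (A i), c * (1 + t ^ 2) < 2 * t) ∧
      ∀ t ∈ slopeInterval (A i)ᵀ, c * (1 + t ^ 2) < 2 * t :=
    nhdsWithin_le_nhds <| (eventually_lt_nhds one_pos).and <| eventually_all.2 fun i =>
      (eventually_forall_slopeInterval_mul_one_add_sq_lt (hpos i)).and
        (eventually_forall_slopeInterval_mul_one_add_sq_lt (A := (A i)ᵀ) fun k l => hpos i l k)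
  obtain ⟨c, ⟨hc1, hS⟩, hc0⟩ := (hev.and self_mem_nhdsWithin).exists
  have hcos : cos (arccos c) = c := cos_arccos (by linarith) hc1.le
  have hβ0 : 0 < arccos c := arccos_pos.2 hc1
  have hβ1 : arccos c < π / 2 := arccos_lt_pi_div_two.2 hc0
  have hβ : 0 ≤ cos (arccos c / 2) := cos_nonneg_of_mem_Icc ⟨by linarith, by linarith⟩
  have hβ' : 0 ≤ cos (arccos c) := hcos.symm ▸ hc0.le
  rw [← hcos] at hS hc1
  refine ⟨arccos c, hβ0, hβ1, fun i x hx hx0 => ?_, fun i x hx hx0 => ?_, fun i j hij => ?_⟩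
  · exact toEuclideanLin_mem_cone_theta (hpos i) hβ hβ' (hS i).1 hx hx0
  · exact toEuclideanLin_mem_cone_theta (fun k l => hpos i l k) hβ hβ' (hS i).2 hx hx0
  · have h0 := zero_mem_closure_cone (theta_mem_cone_theta hβ hc1)
    refine (image_inter_image_closure_cone_theta_subset (hpos i) hβ hβ' (hpos j)
      (hsep i j hij)).antisymm ?_
    rintro _ rfl
    exact ⟨⟨0, h0, map_zero _⟩, ⟨0, h0, map_zero _⟩⟩

/-- (X1) ⟹ (K1): if the matrices have strictly positive entries and the slope intervals
`[w_i/u_i, z_i/v_i]` are pairwise disjoint, then with `θ = (1/√2)(1,1)` there is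
`0 < β < π/2` for which the cone conditions (K1a), (K1b) and the separation condition (K1c)
hold. -/
theorem slope_condition_implies_kakeya_cones (κ : ℕ) (hκ : 2 ≤ κ)
    (A : Fin κ → Matrix (Fin 2) (Fin 2) ℝ) (u v w z : Fin κ → ℝ)
    (hu : ∀ i, 0 < u i) (hv : ∀ i, 0 < v i) (hw : ∀ i, 0 < w i) (hz : ∀ i, 0 < z i)
    (hA : ∀ i, A i = !![u i, v i; w i, z i])
    (hinv : ∀ i, IsUnit (A i).det) (ᾱ : ℝ) (hᾱ : ᾱ < 1) (hnorm : ∀ i, a1 (A i) ≤ ᾱ)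
    (hdisj : ∀ i j, i ≠ j →
      Set.Icc (min (w i / u i) (z i / v i)) (max (w i / u i) (z i / v i)) ∩
      Set.Icc (min (w j / u j) (z j / v j)) (max (w j / u j) (z j / v j)) = ∅) :
    ∃ β : ℝ, 0 < β ∧ β < π / 2 ∧
      (∀ i, ∀ x ∈ closure (cone theta β), x ≠ 0 →
        Matrix.toEuclideanLin (A i) x ∈ cone theta β) ∧
      (∀ i, ∀ x ∈ closure (cone theta β), x ≠ 0 →
        Matrix.toEuclideanLin (A i)ᵀ x ∈ cone theta β) ∧
      (∀ i j, i ≠ j →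
        (Matrix.toEuclideanLin (A i) '' closure (cone theta β)) ∩
          (Matrix.toEuclideanLin (A j) '' closure (cone theta β)) = {0}) :=
  slope_condition_implies_kakeya_cones_general κ A u v w z hu hv hw hz hA hdisj

end
end

section
/- Let A ∈ ℝ^{d×d} satisfy A(cl(𝒬_d ∪ −𝒬_d)) ⊂ 𝒬_d ∪ −𝒬_d, where 𝒬_d is the set of vectors in ℝ^d with all coordinates strictly positive and cl denotes closure. Then there exists a (d−1)-dimensional linear subspace H ⊂ ℝ^d such that for every w ∈ ℝ^d \ H there is n₀ ∈ ℕ with Aⁿw ∈ 𝒬_d ∪ −𝒬_d for all n ≥ n₀. -/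
open Set Matrix

noncomputable section

/-- the open positive cone `𝒬_d` in `ℝ^d` -/
def posCone (d : ℕ) : Set (Fin d → ℝ) := {v | ∀ i, 0 < v i}

/-- the double cone `𝒬_d ∪ −𝒬_d` -/
def doubleCone (d : ℕ) : Set (Fin d → ℝ) := posCone d ∪ (-posCone d)

/-!
The standard simplex is connected and `A` maps it into the double cone, whose two halves are
open and disjoint; since the simplex contains the basis vectors, either `A` or `-A` is entrywise
positive, and `(-A)ⁿ = ±Aⁿ`. So let `B` be entrywise positive. A maximiser of the
Collatz–Wielandt function `y ↦ minᵢ (B y)ᵢ / yᵢ` on the compact set `B(simplex)` is a positive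
eigenvector `v` of `B` (otherwise one more application of `B` increases the function), and likewise
`Bᵀ` has a positive eigenvector `φ`, for the same eigenvalue `r`. Take `H = ker φ`.
Since `B ≥ ε v φᵀ` entrywise for some `ε > 0`, on the `B`-invariant hyperplane `H` the matrix `B`
agrees with the nonnegative matrix `B - ε v φᵀ`, which has eigenvalue `ρ = r - ε φ ⬝ v < r` at `v`.
Hence for `u ∈ H`, `|Bⁿ u| ≤ K ρⁿ v`, and writing `w = c v + u` with `c = φ ⬝ w / φ ⬝ v` gives
`Bⁿ w ≥ (c rⁿ - K ρⁿ) v`, which has the sign of `c` for large `n`.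
-/

open Finset Filter

namespace Matrix

variable {m n R : Type*} [Fintype n]

theorem continuous_mulVec [NonUnitalNonAssocSemiring R] [TopologicalSpace R]
    [IsTopologicalSemiring R] (B : Matrix m n R) : Continuous (B *ᵥ ·) := by
  fun_prop

theorem pow_mulVec_of_mulVec_eq_smul [DecidableEq n] [CommSemiring R] {B : Matrix n n R}
    {r : R} {v : n → R} (h : B *ᵥ v = r • v) (k : ℕ) : B ^ k *ᵥ v = r ^ k • v := by
  induction k with
  | zero => simp
  | succ k ih => rw [pow_succ', ← mulVec_mulVec, ih, mulVec_smul, h, smul_smul, pow_succ]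

theorem vecMul_pow_of_vecMul_eq_smul [DecidableEq n] [CommSemiring R] {B : Matrix n n R}
    {r : R} {φ : n → R} (h : φ ᵥ* B = r • φ) (k : ℕ) : φ ᵥ* B ^ k = r ^ k • φ := by
  induction k with
  | zero => simp
  | succ k ih => rw [pow_succ, ← vecMul_vecMul, ih, smul_vecMul, h, smul_smul, pow_succ]

theorem eigenvalue_eq_of_vecMul_eq_smul [CommRing R] [IsDomain R] {B : Matrix n n R} {r μ : R}
    {v φ : n → R} (hv : B *ᵥ v = r • v) (hφ : φ ᵥ* B = μ • φ) (hφv : φ ⬝ᵥ v ≠ 0) : μ = r := by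
  refine mul_right_cancel₀ hφv ?_
  rw [← smul_eq_mul, ← smul_dotProduct, ← hφ, ← dotProduct_mulVec, hv, dotProduct_smul,
    smul_eq_mul]

theorem mulVec_pos_of_pos {B : Matrix n n ℝ} (hB : ∀ i j, 0 < B i j) {x : n → ℝ} (hx : 0 < x)
    (i : n) : 0 < (B *ᵥ x) i := by
  obtain ⟨hx, j, hj⟩ := Pi.lt_def.1 hx
  exact sum_pos' (fun k _ => mul_nonneg (hB i k).le (hx k)) ⟨j, mem_univ j, mul_pos (hB i j) hj⟩

theorem abs_mulVec_le_of_nonneg {N : Matrix n n ℝ} (hN : ∀ i j, 0 ≤ N i j) {c : ℝ}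
    {v y : n → ℝ} (hy : ∀ j, |y j| ≤ c * v j) (i : n) : |(N *ᵥ y) i| ≤ c * (N *ᵥ v) i :=
  calc |(N *ᵥ y) i| ≤ ∑ j, N i j * |y j| :=
        (abs_sum_le_sum_abs _ _).trans_eq (by simp [abs_mul, abs_of_nonneg (hN i _)])
    _ ≤ ∑ j, N i j * (c * v j) :=
        sum_le_sum fun j _ => mul_le_mul_of_nonneg_left (hy j) (hN i j)
    _ = c * (N *ᵥ v) i := by simp [mulVec, dotProduct, mul_sum, mul_left_comm]

variable [Nonempty n]

def collatzWielandt (B : Matrix n n ℝ) (y : n → ℝ) : ℝ :=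
  univ.inf' univ_nonempty fun i => (B *ᵥ y) i / y i

variable {B : Matrix n n ℝ}

theorem collatzWielandt_mul_le {y : n → ℝ} (hy : ∀ i, 0 < y i) (i : n) :
    collatzWielandt B y * y i ≤ (B *ᵥ y) i :=
  (le_div_iff₀ (hy i)).1 (inf'_le _ (mem_univ i))

theorem collatzWielandt_smul {c : ℝ} (hc : c ≠ 0) (y : n → ℝ) :
    collatzWielandt B (c • y) = collatzWielandt B y := by
  simp only [collatzWielandt, mulVec_smul, Pi.smul_apply, smul_eq_mul, mul_div_mul_left _ _ hc]

theorem continuousOn_collatzWielandt :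
    ContinuousOn (collatzWielandt B) {y | ∀ i, 0 < y i} :=
  ContinuousOn.finset_inf'_apply _ fun i _ =>
    ((continuous_apply i).comp B.continuous_mulVec).continuousOn.div
      (continuous_apply i).continuousOn fun _ hy => (hy i).ne'

theorem exists_pos_eigenvector_of_pos (hB : ∀ i j, 0 < B i j) :
    ∃ r : ℝ, ∃ v : n → ℝ, (∀ i, 0 < v i) ∧ B *ᵥ v = r • v := by
  classical
  have hpos : ∀ x ∈ stdSimplex ℝ n, ∀ i, 0 < (B *ᵥ x) i := fun x hx =>
    mulVec_pos_of_pos hB <| lt_of_le_of_ne hx.1 fun h => by simpa [← h] using hx.2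
  obtain ⟨_, ⟨x, hx, rfl⟩, hmax⟩ :=
    ((isCompact_stdSimplex ℝ n).image B.continuous_mulVec).exists_isMaxOn
      (Nonempty.image _ ⟨_, single_mem_stdSimplex ℝ (Classical.arbitrary n)⟩)
      ((continuousOn_collatzWielandt (B := B)).mono (image_subset_iff.2 hpos))
  set y := B *ᵥ x
  have hy : ∀ i, 0 < y i := hpos x hx
  have hBy : ∀ i, 0 < (B *ᵥ y) i :=
    mulVec_pos_of_pos hB (Pi.lt_def.2 ⟨fun j => (hy j).le, Classical.arbitrary n, hy _⟩)
  refine ⟨collatzWielandt B y, y, hy, ?_⟩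
  by_contra hne
  set r := collatzWielandt B y
  have hgap : 0 < B *ᵥ y - r • y := lt_of_le_of_ne
    (fun i => sub_nonneg.2 (by simpa [mul_comm] using collatzWielandt_mul_le hy i))
    (Ne.symm (sub_ne_zero.2 hne))
  have hlt : r < collatzWielandt B (B *ᵥ y) := by
    refine (lt_inf'_iff _).2 fun i _ => (lt_div_iff₀ (hBy i)).2 ?_
    simpa [mulVec_sub, mulVec_smul, sub_pos] using mulVec_pos_of_pos hB hgap i
  set s := ∑ i, y i
  have hs : 0 < s := sum_pos (fun i _ => hy i) univ_nonempty
  have hmem : s⁻¹ • y ∈ stdSimplex ℝ n :=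
    ⟨fun i => smul_nonneg (inv_nonneg.2 hs.le) (hy i).le, by simp [← mul_sum, s, hs.ne']⟩
  have hle : collatzWielandt B (B *ᵥ (s⁻¹ • y)) ≤ r := hmax (mem_image_of_mem _ hmem)
  rw [mulVec_smul, collatzWielandt_smul (inv_ne_zero hs.ne')] at hle
  exact hle.not_gt hlt

theorem exists_pos_eigenvectors_of_pos (hB : ∀ i j, 0 < B i j) :
    ∃ r : ℝ, ∃ v φ : n → ℝ, (∀ i, 0 < v i) ∧ (∀ i, 0 < φ i) ∧
      B *ᵥ v = r • v ∧ φ ᵥ* B = r • φ := by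
  obtain ⟨r, v, hv, hBv⟩ := exists_pos_eigenvector_of_pos hB
  obtain ⟨μ, φ, hφ, hφB⟩ := exists_pos_eigenvector_of_pos (B := Bᵀ) fun i j => hB j i
  rw [mulVec_transpose] at hφB
  have hφv : φ ⬝ᵥ v ≠ 0 := (sum_pos (fun i _ => mul_pos (hφ i) (hv i)) univ_nonempty).ne'
  exact ⟨r, v, φ, hv, hφ, hBv, eigenvalue_eq_of_vecMul_eq_smul hBv hφB hφv ▸ hφB⟩

theorem nonneg_of_mulVec_eq_smul {N : Matrix n n ℝ} (hN : ∀ i j, 0 ≤ N i j) {ρ : ℝ}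
    {v : n → ℝ} (hv : ∀ i, 0 < v i) (hNv : N *ᵥ v = ρ • v) : 0 ≤ ρ := by
  have i := Classical.arbitrary n
  have h : 0 ≤ (N *ᵥ v) i := sum_nonneg fun j _ => mul_nonneg (hN i j) (hv j).le
  rw [hNv, Pi.smul_apply, smul_eq_mul] at h
  exact (mul_nonneg_iff_of_pos_right (hv i)).1 h

theorem exists_pos_smul_vecMulVec_le (hB : ∀ i j, 0 < B i j) {v φ : n → ℝ}
    (hv : ∀ i, 0 < v i) (hφ : ∀ i, 0 < φ i) :
    ∃ ε : ℝ, 0 < ε ∧ ∀ i j, (ε • vecMulVec v φ) i j ≤ B i j := by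
  set ε := univ.inf' univ_nonempty fun p : n × n => B p.1 p.2 / (v p.1 * φ p.2)
  refine ⟨ε, (lt_inf'_iff _).2 fun p _ => div_pos (hB _ _) (mul_pos (hv _) (hφ _)), fun i j => ?_⟩
  rw [smul_apply, vecMulVec_apply, smul_eq_mul, ← le_div_iff₀ (mul_pos (hv i) (hφ j))]
  exact inf'_le _ (mem_univ (i, j))

theorem exists_lt_abs_pow_mulVec_le [DecidableEq n] (hB : ∀ i j, 0 < B i j) {r : ℝ}
    {v φ : n → ℝ} (hv : ∀ i, 0 < v i) (hφ : ∀ i, 0 < φ i) (hBv : B *ᵥ v = r • v)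
    (hφB : φ ᵥ* B = r • φ) :
    ∃ ρ, 0 ≤ ρ ∧ ρ < r ∧ ∀ u : n → ℝ, φ ⬝ᵥ u = 0 → ∀ K : ℝ, (∀ i, |u i| ≤ K * v i) →
      ∀ k i, |(B ^ k *ᵥ u) i| ≤ K * ρ ^ k * v i := by
  obtain ⟨ε, hε, hεB⟩ := exists_pos_smul_vecMulVec_le hB hv hφ
  set N := B - ε • vecMulVec v φ
  have hN : ∀ i j, 0 ≤ N i j := fun i j => sub_nonneg.2 (hεB i j)
  have hNv : N *ᵥ v = (r - ε * (φ ⬝ᵥ v)) • v := by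
    simp [N, sub_mulVec, smul_mulVec, vecMulVec_mulVec, hBv, sub_smul, smul_smul,
      dotProduct_comm]
  have hNB : ∀ y, φ ⬝ᵥ y = 0 → N *ᵥ y = B *ᵥ y := fun y hy => by
    simp [N, sub_mulVec, smul_mulVec, vecMulVec_mulVec, hy]
  have hφv : 0 < φ ⬝ᵥ v := sum_pos (fun i _ => mul_pos (hφ i) (hv i)) univ_nonempty
  refine ⟨_, nonneg_of_mulVec_eq_smul hN hv hNv, sub_lt_self r (mul_pos hε hφv),
    fun u hu K hK k => ?_⟩
  induction k with
  | zero => simpa using hK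
  | succ k ih =>
    intro i
    have hker : φ ⬝ᵥ (B ^ k *ᵥ u) = 0 := by
      rw [dotProduct_mulVec, vecMul_pow_of_vecMul_eq_smul hφB, smul_dotProduct, hu, smul_zero]
    rw [pow_succ', ← mulVec_mulVec, ← hNB _ hker]
    calc _ ≤ K * (r - ε * (φ ⬝ᵥ v)) ^ k * (N *ᵥ v) i := abs_mulVec_le_of_nonneg hN ih i
      _ = _ := by rw [hNv, Pi.smul_apply, smul_eq_mul]; ring

theorem eventually_pow_mulVec_pos [DecidableEq n] (hB : ∀ i j, 0 < B i j) {r : ℝ}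
    {v φ w : n → ℝ} (hv : ∀ i, 0 < v i) (hφ : ∀ i, 0 < φ i) (hBv : B *ᵥ v = r • v)
    (hφB : φ ᵥ* B = r • φ) (hw : 0 < φ ⬝ᵥ w) : ∀ᶠ k in atTop, ∀ i, 0 < (B ^ k *ᵥ w) i := by
  obtain ⟨ρ, hρ, hρr, hdecay⟩ := exists_lt_abs_pow_mulVec_le hB hv hφ hBv hφB
  have hr : 0 < r := hρ.trans_lt hρr
  have hφv : 0 < φ ⬝ᵥ v := sum_pos (fun i _ => mul_pos (hφ i) (hv i)) univ_nonempty
  set c := (φ ⬝ᵥ w) / (φ ⬝ᵥ v)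
  have hc : 0 < c := div_pos hw hφv
  set u := w - c • v
  have hu : φ ⬝ᵥ u = 0 := by simp [u, dotProduct_sub, c, hφv.ne']
  obtain ⟨K, hK⟩ : ∃ K, ∀ i, |u i| ≤ K * v i := by
    obtain ⟨K, hK⟩ := Finite.bddAbove_range fun i => |u i| / v i
    exact ⟨K, fun i => (div_le_iff₀ (hv i)).1 (hK (mem_range_self i))⟩
  have hlim : ∀ᶠ k in atTop, K * (ρ / r) ^ k < c :=
    ((tendsto_pow_atTop_nhds_zero_of_lt_one (div_nonneg hρ hr.le)
      ((div_lt_one hr).2 hρr)).const_mul K).eventually_lt_const (by simpa using hc)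
  filter_upwards [hlim] with k hk i
  have hk' : K * ρ ^ k < c * r ^ k := by
    rwa [div_pow, ← mul_div_assoc, div_lt_iff₀ (pow_pos hr k)] at hk
  have hdecomp : B ^ k *ᵥ w = (c * r ^ k) • v + B ^ k *ᵥ u := by
    rw [← smul_smul, ← pow_mulVec_of_mulVec_eq_smul hBv, ← mulVec_smul, ← mulVec_add,
      add_sub_cancel]
  calc 0 < (c * r ^ k - K * ρ ^ k) * v i := mul_pos (sub_pos.2 hk') (hv i)
    _ ≤ (B ^ k *ᵥ w) i := by
      rw [hdecomp, Pi.add_apply, Pi.smul_apply, smul_eq_mul]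
      linarith [neg_abs_le ((B ^ k *ᵥ u) i), hdecay u hu K hK k i]

end Matrix

theorem finrank_ker_dotProductEquiv {K n : Type*} [Field K] [Fintype n] [DecidableEq n]
    {φ : n → K} (hφ : φ ≠ 0) :
    Module.finrank K (LinearMap.ker (dotProductEquiv K n φ)) = Fintype.card n - 1 := by
  have := Module.Dual.finrank_ker_add_one_of_ne_zero ((dotProductEquiv K n).map_ne_zero_iff.2 hφ)
  rw [Module.finrank_fintype_fun_eq_card] at this
  omega

theorem posCone_eq_pi (d : ℕ) : posCone d = Set.univ.pi fun _ => Set.Ioi (0 : ℝ) := by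
  ext
  simp [posCone]

theorem isOpen_posCone (d : ℕ) : IsOpen (posCone d) :=
  posCone_eq_pi d ▸ isOpen_set_pi finite_univ fun _ _ => isOpen_Ioi

theorem closure_posCone (d : ℕ) : closure (posCone d) = {x | 0 ≤ x} := by
  rw [posCone_eq_pi, closure_pi_set]
  ext
  simp [Pi.le_def]

theorem disjoint_posCone_neg (d : ℕ) [NeZero d] : Disjoint (posCone d) (-posCone d) :=
  Set.disjoint_left.2 fun _ hx hx' => (hx 0).not_gt (by simpa using hx' 0)

theorem neg_mem_doubleCone_iff {d : ℕ} {x : Fin d → ℝ} :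
    -x ∈ doubleCone d ↔ x ∈ doubleCone d := by
  simp [doubleCone, or_comm]

theorem neg_pow_mulVec_mem_doubleCone_iff {d : ℕ} {A : Matrix (Fin d) (Fin d) ℝ}
    {w : Fin d → ℝ} (k : ℕ) : (-A) ^ k *ᵥ w ∈ doubleCone d ↔ A ^ k *ᵥ w ∈ doubleCone d := by
  rcases k.even_or_odd with hk | hk
  · rw [hk.neg_pow]
  · rw [hk.neg_pow, neg_mulVec, neg_mem_doubleCone_iff]

theorem pos_or_neg_pos_of_mapsTo_doubleCone {d : ℕ} [NeZero d] {A : Matrix (Fin d) (Fin d) ℝ}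
    (hA : ∀ x ∈ closure (doubleCone d), x ≠ 0 → A *ᵥ x ∈ doubleCone d) :
    (∀ i j, 0 < A i j) ∨ ∀ i j, 0 < (-A) i j := by
  have hsub : (A *ᵥ ·) '' stdSimplex ℝ (Fin d) ⊆ posCone d ∪ -posCone d := by
    rintro _ ⟨x, hx, rfl⟩
    refine hA x (closure_mono subset_union_left ((closure_posCone d).symm ▸ hx.1)) ?_
    rintro rfl
    simpa using hx.2
  have hcol : ∀ j, A *ᵥ Pi.single j 1 ∈ (A *ᵥ ·) '' stdSimplex ℝ (Fin d) :=
    fun j => mem_image_of_mem _ (single_mem_stdSimplex ℝ j)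
  have hconn := (convex_stdSimplex ℝ (Fin d)).isPreconnected.image _
    A.continuous_mulVec.continuousOn
  rcases hconn.subset_or_subset (isOpen_posCone d) (isOpen_posCone d).neg
    (disjoint_posCone_neg d) hsub with h | h
  · exact Or.inl fun i j => by simpa using h (hcol j) i
  · exact Or.inr fun i j => by simpa using h (hcol j) i

theorem exists_eventually_pow_mulVec_mem_doubleCone {d : ℕ} [NeZero d]
    {B : Matrix (Fin d) (Fin d) ℝ} (hB : ∀ i j, 0 < B i j) :
    ∃ φ : Fin d → ℝ, φ ≠ 0 ∧ ∀ w, φ ⬝ᵥ w ≠ 0 → ∀ᶠ k in atTop, B ^ k *ᵥ w ∈ doubleCone d := by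
  obtain ⟨r, v, φ, hv, hφ, hBv, hφB⟩ := exists_pos_eigenvectors_of_pos hB
  refine ⟨φ, fun h => (hφ 0).ne' (congrFun h 0), fun w hw => ?_⟩
  rcases hw.lt_or_gt with hw | hw
  · refine (eventually_pow_mulVec_pos hB hv hφ hBv hφB (w := -w) (by simpa using hw)).mono
      fun k hk => Or.inr <| Set.mem_neg.2 fun i => by simpa [mulVec_neg] using hk i
  · exact (eventually_pow_mulVec_pos hB hv hφ hBv hφB hw).mono fun k hk => Or.inl hk

/-- Lemma A.2: if a matrix maps the closure of the double cone `𝒬_d ∪ −𝒬_d` (minus the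
origin) into the open double cone, then there is a hyperplane `H` such that every vector
off `H` is eventually mapped into the double cone by all large powers of `A`. -/
theorem eventually_in_cone (d : ℕ) (A : Matrix (Fin d) (Fin d) ℝ)
    (hA : ∀ x ∈ closure (doubleCone d), x ≠ 0 → A.mulVec x ∈ doubleCone d) :
    ∃ H : Submodule ℝ (Fin d → ℝ), Module.finrank ℝ H = d - 1 ∧
      ∀ w : Fin d → ℝ, w ∉ H → ∃ n₀ : ℕ, ∀ n ≥ n₀, (A ^ n).mulVec w ∈ doubleCone d := by
  rcases Nat.eq_zero_or_pos d with rfl | hd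
  · exact ⟨⊥, by simp, fun w _ => ⟨0, fun _ _ => Or.inl finZeroElim⟩⟩
  have : NeZero d := ⟨hd.ne'⟩
  obtain ⟨φ, hφ, hev⟩ : ∃ φ : Fin d → ℝ, φ ≠ 0 ∧
      ∀ w, φ ⬝ᵥ w ≠ 0 → ∀ᶠ k in atTop, A ^ k *ᵥ w ∈ doubleCone d := by
    rcases pos_or_neg_pos_of_mapsTo_doubleCone hA with hpos | hneg
    · exact exists_eventually_pow_mulVec_mem_doubleCone hpos
    · obtain ⟨φ, hφ, hev⟩ := exists_eventually_pow_mulVec_mem_doubleCone hneg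
      exact ⟨φ, hφ, fun w hw => (hev w hw).mono fun k => (neg_pow_mulVec_mem_doubleCone_iff k).1⟩
  refine ⟨LinearMap.ker (dotProductEquiv ℝ (Fin d) φ), ?_, fun w hw => ?_⟩
  · simpa using finrank_ker_dotProductEquiv hφ
  · exact eventually_atTop.1 (hev w (by simpa using hw))

end
end
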